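/- arXiv:1605.00229 — 3 statements merged into one kernel-verified Lean document; each statement's English description precedes it below -/
import Mathlib

section
/- Let U be a gl_m-module. Define an action of H_N on (C^m)^{⊗N} ⊗ U by letting S_N permute the N tensor factors C^m and letting z_p act as Ω_p = Σ_{a,b=1}^m E_{ab}^{(p)} ⊗ E_{ba}, where E_{ab}^{(p)} acts by E_{ab} in the p-th tensor factor and E_{ba} acts on U. Then the operators Ω_p satisfy [Ω_p, Ω_q] = σ_{pq}(Ω_p − Ω_q) and σ Ω_p σ^{−1} = Ω_{σ(p)}, so this gives a well-defined H_N-module structure. -/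
/-!
Write `e^(p)_ab` for the matrix unit `E_ab` acting in the `p`-th tensor factor, so that
`Ω_p = Σ e^(p)_ab ⊗ ρ(E_ba)`. For `p ≠ q` the families `e^(p)` and `e^(q)` are commuting systems
of matrix units and the flip is `σ_pq = Σ_cd e^(p)_cd e^(q)_dc`; nothing else about them is
needed. Expanding `[Ω_p, Ω_q] = Σ e^(p)_ab e^(q)_cd ⊗ ρ[E_ba, E_dc]` with
`[E_ba, E_dc] = δ_ad E_bc - δ_bc E_da` gives two triple sums, and the identities
`σ_pq e^(p)_ab = Σ_c e^(p)_cb e^(q)_ac` and `σ_pq e^(q)_ab = Σ_c e^(p)_ac e^(q)_cb` identify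
them with `σ_pq Ω_p` and `σ_pq Ω_q`. The conjugation relation holds term by term, because
`σ e^(p)_ab σ⁻¹ = e^(σ p)_ab`.
-/

open scoped TensorProduct
open scoped Classical

/-- The vector space `(ℂ^m)^{⊗N}`, realized as functions on the standard basis
indexed by `Fin N → Fin m`. -/
abbrev TensorPow (m N : ℕ) := (Fin N → Fin m) → ℂ

/-- The operator permuting the `N` tensor factors of `(ℂ^m)^{⊗N}` by `σ`. -/
noncomputable def permOp {m N : ℕ} (σ : Equiv.Perm (Fin N)) :
    Module.End ℂ (TensorPow m N) where
  toFun f := fun g => f (g ∘ σ)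
  map_add' _ _ := rfl
  map_smul' _ _ := rfl

/-- The operator `E_{ab}^{(p)}`, acting as the matrix unit `E_{ab}` in the `p`-th
tensor factor of `(ℂ^m)^{⊗N}` and identically elsewhere. -/
noncomputable def matUnitOp {m N : ℕ} (p : Fin N) (a b : Fin m) :
    Module.End ℂ (TensorPow m N) where
  toFun f := fun g => if g p = a then f (Function.update g p b) else 0
  map_add' _ _ := by funext g; by_cases h : g p = a <;> simp [h]
  map_smul' _ _ := by funext g; by_cases h : g p = a <;> simp [h]

variable {m N : ℕ} {U : Type*} [AddCommGroup U] [Module ℂ U]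

/-- The permutation operator on `(ℂ^m)^{⊗N} ⊗ U`. -/
noncomputable def permT (σ : Equiv.Perm (Fin N)) :
    Module.End ℂ (TensorPow m N ⊗[ℂ] U) :=
  TensorProduct.map (permOp σ) LinearMap.id

/-- Given a representation `ρ` of `gl_m` on `U`, the operator
`Ω_p = Σ_{a,b} E_{ab}^{(p)} ⊗ E_{ba}` on `(ℂ^m)^{⊗N} ⊗ U`. -/
noncomputable def omegaOp (ρ : Matrix (Fin m) (Fin m) ℂ →ₗ[ℂ] Module.End ℂ U)
    (p : Fin N) : Module.End ℂ (TensorPow m N ⊗[ℂ] U) :=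
  ∑ a : Fin m, ∑ b : Fin m,
    TensorProduct.map (matUnitOp p a b) (ρ (Matrix.single b a 1))

open TensorProduct

section TensorProductMap

variable {R V V' W W' : Type*} [CommRing R] [AddCommGroup V] [Module R V] [AddCommGroup V']
  [Module R V'] [AddCommGroup W] [Module R W] [AddCommGroup W'] [Module R W']

theorem TensorProduct.map_sub_right (f : V →ₗ[R] V') (g₁ g₂ : W →ₗ[R] W') :
    map f (g₁ - g₂) = map f g₁ - map f g₂ :=
  (mapBilinear (RingHom.id R) V W V' W' f).map_sub g₁ g₂

theorem TensorProduct.map_sum_left {κ : Type*} (s : Finset κ) (f : κ → V →ₗ[R] V')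
    (g : W →ₗ[R] W') : map (∑ i ∈ s, f i) g = ∑ i ∈ s, map (f i) g :=
  map_sum ((mapBilinear (RingHom.id R) V W V' W').flip g) f s

theorem TensorProduct.lie_map_map_of_commute {f₁ f₂ : Module.End R V} (h : Commute f₁ f₂)
    (g₁ g₂ : Module.End R W) : ⁅map f₁ g₁, map f₂ g₂⁆ = map (f₁ * f₂) ⁅g₁, g₂⁆ := by
  rw [Ring.lie_def, Ring.lie_def, ← TensorProduct.map_mul, ← TensorProduct.map_mul, h.eq,
    map_sub_right]

end TensorProductMap

theorem Matrix.lie_single_single {n α : Type*} [DecidableEq n] [Fintype n] [CommRing α]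
    (i j k l : n) :
    ⁅(single i j 1 : Matrix n n α), (single k l 1 : Matrix n n α)⁆ =
      (if j = k then single i l 1 else 0) - (if l = i then single k j 1 else 0) := by
  rw [Ring.lie_def]
  split_ifs <;> subst_vars <;> simp [*]

def IsMatrixUnits {ι A : Type*} [Semiring A] (e : ι → ι → A) : Prop :=
  ∀ a b c d, e a b * e c d = if b = c then e a d else 0

section Casimir

attribute [local instance] LieRing.ofAssociativeRing

variable {ι R V W : Type*} [Fintype ι] [DecidableEq ι] [CommRing R]
  [AddCommGroup V] [Module R V] [AddCommGroup W] [Module R W]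

def casimirOp (e : ι → ι → Module.End R V) (ρ : Matrix ι ι R →ₗ[R] Module.End R W) :
    Module.End R (V ⊗[R] W) :=
  ∑ a, ∑ b, map (e a b) (ρ (Matrix.single b a 1))

def unitSwap (e f : ι → ι → Module.End R V) : Module.End R V :=
  ∑ c, ∑ d, e c d * f d c

theorem map_mul_casimirOp {P : Module.End R V} {e e' : ι → ι → Module.End R V}
    (h : ∀ a b, P * e a b = e' a b * P) (ρ : Matrix ι ι R →ₗ[R] Module.End R W) :
    map P 1 * casimirOp e ρ = casimirOp e' ρ * map P 1 := by
  simp only [casimirOp, Finset.mul_sum, Finset.sum_mul, ← TensorProduct.map_mul, h, one_mul,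
    mul_one]

variable {e f : ι → ι → Module.End R V} {ρ : Matrix ι ι R →ₗ[R] Module.End R W}

theorem unitSwap_mul_left (he : IsMatrixUnits e) (hef : ∀ a b c d, Commute (e a b) (f c d))
    (a b : ι) : unitSwap e f * e a b = ∑ c, e c b * f a c := by
  simp only [unitSwap, Finset.sum_mul, mul_assoc, ← (hef _ _ _ _).eq]
  simp only [← mul_assoc, he _ _ _ _, ite_mul, zero_mul, Finset.sum_ite_eq', Finset.mem_univ,
    if_true]

theorem unitSwap_mul_right (hf : IsMatrixUnits f) (a b : ι) :
    unitSwap e f * f a b = ∑ c, e a c * f c b := by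
  simp only [unitSwap, Finset.sum_mul, mul_assoc, hf _ _ _ _, mul_ite, mul_zero,
    Finset.sum_ite_irrel, Finset.sum_const_zero, Finset.sum_ite_eq', Finset.mem_univ, if_true]

theorem map_unitSwap_mul_casimirOp_left (he : IsMatrixUnits e)
    (hef : ∀ a b c d, Commute (e a b) (f c d)) :
    map (unitSwap e f) 1 * casimirOp e ρ =
      ∑ a, ∑ b, ∑ c, map (e c b * f a c) (ρ (Matrix.single b a 1)) := by
  simp only [casimirOp, Finset.mul_sum, ← TensorProduct.map_mul, one_mul,
    unitSwap_mul_left he hef]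
  simp only [map_sum_left]

theorem map_unitSwap_mul_casimirOp_right (hf : IsMatrixUnits f) :
    map (unitSwap e f) 1 * casimirOp f ρ =
      ∑ a, ∑ b, ∑ c, map (e a c * f c b) (ρ (Matrix.single b a 1)) := by
  simp only [casimirOp, Finset.mul_sum, ← TensorProduct.map_mul, one_mul, unitSwap_mul_right hf]
  simp only [map_sum_left]

theorem lie_casimirOp_eq (hef : ∀ a b c d, Commute (e a b) (f c d))
    (hρ : ∀ X Y, ρ ⁅X, Y⁆ = ⁅ρ X, ρ Y⁆) :
    ⁅casimirOp e ρ, casimirOp f ρ⁆ =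
      ∑ a, ∑ c, ∑ b, map (e c b * f a c) (ρ (Matrix.single b a 1)) -
      ∑ c, ∑ b, ∑ a, map (e a c * f c b) (ρ (Matrix.single b a 1)) := by
  simp only [casimirOp, sum_lie, lie_sum, lie_map_map_of_commute (hef _ _ _ _), ← hρ,
    Matrix.lie_single_single]
  simp only [map_sub, map_sub_right, apply_ite ρ, map_zero, apply_ite (map _), map_zero_right,
    Finset.sum_sub_distrib, Finset.sum_ite_irrel, Finset.sum_const_zero, Finset.sum_ite_eq,
    Finset.sum_ite_eq', Finset.mem_univ, if_true]

theorem casimirOp_lie_casimirOp (he : IsMatrixUnits e) (hf : IsMatrixUnits f)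
    (hef : ∀ a b c d, Commute (e a b) (f c d)) (hρ : ∀ X Y, ρ ⁅X, Y⁆ = ⁅ρ X, ρ Y⁆) :
    ⁅casimirOp e ρ, casimirOp f ρ⁆ = map (unitSwap e f) 1 * (casimirOp e ρ - casimirOp f ρ) := by
  rw [mul_sub, map_unitSwap_mul_casimirOp_left he hef, map_unitSwap_mul_casimirOp_right hf,
    lie_casimirOp_eq hef hρ]
  congr 1
  · exact Finset.sum_congr rfl fun _ _ => Finset.sum_comm
  · rw [Finset.sum_congr rfl fun _ _ => Finset.sum_comm, Finset.sum_comm]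
    exact Finset.sum_congr rfl fun _ _ => Finset.sum_comm

end Casimir

theorem isMatrixUnits_matUnitOp (p : Fin N) : IsMatrixUnits (matUnitOp (m := m) p) := by
  intro a b c d
  ext f g
  by_cases hga : g p = a <;> by_cases hbc : b = c <;>
    simp [matUnitOp, hga, hbc, Function.update_idem]

theorem commute_matUnitOp {p q : Fin N} (hpq : p ≠ q) (a b c d : Fin m) :
    Commute (matUnitOp p a b) (matUnitOp q c d) := by
  ext f g
  by_cases hga : g p = a <;> by_cases hgc : g q = c <;>
    simp [matUnitOp, hga, hgc, hpq, hpq.symm, Function.update_of_ne, Function.update_comm hpq]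

theorem permOp_mul_matUnitOp (σ : Equiv.Perm (Fin N)) (p : Fin N) (a b : Fin m) :
    permOp σ * matUnitOp p a b = matUnitOp (σ p) a b * permOp σ := by
  ext f g
  have : Function.update (g ∘ σ) p b = Function.update g (σ p) b ∘ σ := by
    rw [Function.update_comp_equiv, Equiv.symm_apply_apply]
  simp [permOp, matUnitOp, this]

theorem permOp_swap_eq_unitSwap {p q : Fin N} (hpq : p ≠ q) :
    permOp (m := m) (Equiv.swap p q) = unitSwap (matUnitOp p) (matUnitOp q) := by
  ext f g
  simp [permOp, matUnitOp, unitSwap, Function.update_of_ne hpq.symm, Equiv.comp_swap_eq_update,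
    Function.update_comm hpq]

theorem permT_eq_map (σ : Equiv.Perm (Fin N)) : permT (m := m) (U := U) σ = map (permOp σ) 1 :=
  rfl

theorem permT_mul (σ τ : Equiv.Perm (Fin N)) :
    permT (m := m) (U := U) σ * permT τ = permT (σ * τ) := by
  rw [permT_eq_map, permT_eq_map, permT_eq_map, ← TensorProduct.map_mul, one_mul]
  rfl

theorem permT_one : permT (m := m) (U := U) (1 : Equiv.Perm (Fin N)) = 1 :=
  TensorProduct.map_one

theorem omegaOp_eq_casimirOp (ρ : Matrix (Fin m) (Fin m) ℂ →ₗ[ℂ] Module.End ℂ U) (p : Fin N) :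
    omegaOp ρ p = casimirOp (matUnitOp p) ρ :=
  rfl

theorem permT_mul_omegaOp (ρ : Matrix (Fin m) (Fin m) ℂ →ₗ[ℂ] Module.End ℂ U)
    (σ : Equiv.Perm (Fin N)) (p : Fin N) :
    permT σ * omegaOp ρ p = omegaOp ρ (σ p) * permT σ := by
  rw [omegaOp_eq_casimirOp, omegaOp_eq_casimirOp]
  exact map_mul_casimirOp (permOp_mul_matUnitOp σ p) ρ

/-- For a `gl_m`-module `U`, the operators `Ω_p = Σ_{a,b} E_{ab}^{(p)} ⊗ E_{ba}` on
`(ℂ^m)^{⊗N} ⊗ U` satisfy `[Ω_p, Ω_q] = σ_{pq}(Ω_p − Ω_q)` and `σ Ω_p σ⁻¹ = Ω_{σ(p)}`,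
so together with the permutation action of `S_N` they define an `H_N`-module structure. -/
theorem stmt4 (m N : ℕ) (U : Type*) [AddCommGroup U] [Module ℂ U]
    (ρ : Matrix (Fin m) (Fin m) ℂ →ₗ[ℂ] Module.End ℂ U)
    (hρ : ∀ X Y : Matrix (Fin m) (Fin m) ℂ,
      ρ (X * Y - Y * X) = ρ X * ρ Y - ρ Y * ρ X) :
    (∀ p q : Fin N,
      omegaOp ρ p * omegaOp ρ q - omegaOp ρ q * omegaOp ρ p =
        permT (m := m) (Equiv.swap p q) * (omegaOp ρ p - omegaOp ρ q)) ∧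
    (∀ (σ : Equiv.Perm (Fin N)) (p : Fin N),
      permT (m := m) σ * omegaOp ρ p * permT (m := m) σ⁻¹ = omegaOp ρ (σ p)) := by
  refine ⟨fun p q => ?_, fun σ p => ?_⟩
  · rcases eq_or_ne p q with rfl | hpq
    -- `sub_self` is given its argument: this goal's `Sub` instance on `TensorPow m N ⊗ U`
    -- is reached through `Pi.addCommMonoid`, which rewriting with a bare `sub_self` misses.
    · rw [sub_self (omegaOp ρ p * omegaOp ρ p), sub_self (omegaOp ρ p), mul_zero]
    · rw [permT_eq_map, permOp_swap_eq_unitSwap hpq, omegaOp_eq_casimirOp, omegaOp_eq_casimirOp]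
      exact casimirOp_lie_casimirOp (isMatrixUnits_matUnitOp p) (isMatrixUnits_matUnitOp q)
        (commute_matUnitOp hpq) hρ
  · rw [permT_mul_omegaOp, mul_assoc, permT_mul, mul_inv_cancel, permT_one, mul_one]
end

section
/- The H_N-action on (C^m)^{⊗N} ⊗ U given by permutations of the C^m factors and by z_p ↦ Σ_{a,b=1}^m E_{ab}^{(p)} ⊗ E_{ba} commutes with the diagonal action of gl_m on (C^m)^{⊗N} ⊗ U. -/
/-!
`Ω_p` is the image of the Casimir tensor `∑ E_ab ⊗ E_ba` under `π_p ⊗ ρ`, where `π_p` is the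
representation of `gl_m` on the `p`-th factor. The Casimir tensor is `gl_m`-invariant,
`∑ [X, E_ab] ⊗ E_ba + E_ab ⊗ [X, E_ba] = 0`, and both `π_p` and `ρ` preserve commutators, so
`X^{(p)} ⊗ 1 + 1 ⊗ ρ X` commutes with `Ω_p`; the remaining summands `X^{(q)}`, `q ≠ p`, act on
other factors. A permutation `σ` conjugates `X^{(q)}` into `X^{(σ q)}`, so it commutes with
`∑_q X^{(q)}`.
-/

open scoped TensorProduct
open scoped Classical

variable {m N : ℕ} {U : Type*} [AddCommGroup U] [Module ℂ U]

/-- The action of `X ∈ gl_m` on the `p`-th tensor factor of `(ℂ^m)^{⊗N}`. -/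
noncomputable def matOp {m N : ℕ} (p : Fin N) (X : Matrix (Fin m) (Fin m) ℂ) :
    Module.End ℂ (TensorPow m N) :=
  ∑ a : Fin m, ∑ b : Fin m, X a b • matUnitOp p a b

/-- The diagonal action of `X ∈ gl_m` on `(ℂ^m)^{⊗N} ⊗ U`:
`Σ_p X^{(p)} ⊗ id + id^{⊗N} ⊗ X`. -/
noncomputable def diagAct (ρ : Matrix (Fin m) (Fin m) ℂ →ₗ[ℂ] Module.End ℂ U)
    (X : Matrix (Fin m) (Fin m) ℂ) : Module.End ℂ (TensorPow m N ⊗[ℂ] U) :=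
  (∑ p : Fin N, TensorProduct.map (matOp p X) LinearMap.id) +
    TensorProduct.map LinearMap.id (ρ X)

theorem Commute.tensorProduct_map {R M N : Type*} [CommSemiring R] [AddCommMonoid M]
    [AddCommMonoid N] [Module R M] [Module R N] {f f' : Module.End R M}
    {g g' : Module.End R N} (hf : Commute f f') (hg : Commute g g') :
    Commute (TensorProduct.map f g) (TensorProduct.map f' g') := by
  rw [Commute, SemiconjBy, ← TensorProduct.map_mul, ← TensorProduct.map_mul, hf.eq, hg.eq]

section Casimir

variable {R n M : Type*} [CommRing R] [Fintype n] [DecidableEq n] [AddCommGroup M] [Module R M]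

theorem sum_bilin_mul_single_single (B : Matrix n n R →ₗ[R] Matrix n n R →ₗ[R] M)
    (X : Matrix n n R) :
    ∑ a, ∑ b, B (X * Matrix.single a b 1) (Matrix.single b a 1) =
      ∑ a, ∑ b, B (Matrix.single a b 1) (Matrix.single b a 1 * X) := by
  -- Both sides are additive in `X`, and for `X = E_cd` both equal `∑ b, B E_cb E_bd`.
  induction X using Matrix.induction_on' with
  | h_zero => simp
  | h_add X Y hX hY => simp only [add_mul, mul_add, map_add, LinearMap.add_apply,
      Finset.sum_add_distrib, hX, hY]
  | h_std_basis c d x =>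
    rw [← mul_one x, ← smul_eq_mul, ← Matrix.smul_single]
    simp only [smul_mul_assoc, mul_smul_comm, map_smul, LinearMap.smul_apply, ← Finset.smul_sum]
    congr 1
    rw [Finset.sum_eq_single d (fun a _ ha => by
        simp [Matrix.single_mul_single_of_ne _ _ _ _ (Ne.symm ha)]) (by simp)]
    conv_rhs => rw [Finset.sum_eq_single c (fun a _ ha => by
        simp [Matrix.single_mul_single_of_ne _ _ _ _ ha]) (by simp)]
    simp only [Matrix.single_mul_single_same, mul_one]

theorem sum_bilin_lie_single_single (B : Matrix n n R →ₗ[R] Matrix n n R →ₗ[R] M)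
    (X : Matrix n n R) :
    ∑ a, ∑ b, (B (X * Matrix.single a b 1 - Matrix.single a b 1 * X) (Matrix.single b a 1) +
      B (Matrix.single a b 1) (X * Matrix.single b a 1 - Matrix.single b a 1 * X)) = 0 := by
  have h := sum_bilin_mul_single_single B.flip X
  simp only [LinearMap.flip_apply] at h
  rw [Finset.sum_comm] at h
  conv_rhs at h => rw [Finset.sum_comm]
  simp only [map_sub, LinearMap.sub_apply, Finset.sum_add_distrib, Finset.sum_sub_distrib,
    sum_bilin_mul_single_single B X, h]
  abel

theorem commute_diag_casimir {V U : Type*} [AddCommGroup V] [Module R V] [AddCommGroup U]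
    [Module R U] (π : Matrix n n R →ₐ[R] Module.End R V) (ρ : Matrix n n R →ₗ[R] Module.End R U)
    (hρ : ∀ X Y : Matrix n n R, ρ (X * Y - Y * X) = ρ X * ρ Y - ρ Y * ρ X) (X : Matrix n n R) :
    Commute (TensorProduct.map (π X) 1 + TensorProduct.map 1 (ρ X))
      (∑ a, ∑ b, TensorProduct.map (π (Matrix.single a b 1)) (ρ (Matrix.single b a 1))) := by
  set D := TensorProduct.map (π X) 1 + TensorProduct.map 1 (ρ X)
  let B := (TensorProduct.mapBilinear (RingHom.id R) V U V U).compl₁₂ π.toLinearMap ρ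
  have hB (A C : Matrix n n R) : D * TensorProduct.map (π A) (ρ C) -
      TensorProduct.map (π A) (ρ C) * D = B (X * A - A * X) C + B A (X * C - C * X) := by
    simp only [B, LinearMap.compl₁₂_apply, hρ]
    simp only [D, map_sub, LinearMap.sub_apply, TensorProduct.mapBilinear_apply,
      AlgHom.toLinearMap_apply, _root_.map_mul,
      add_mul, mul_add, ← TensorProduct.map_mul, mul_one, one_mul]
    abel
  rw [Commute, SemiconjBy, ← sub_eq_zero]
  simp only [Finset.mul_sum, Finset.sum_mul, ← Finset.sum_sub_distrib, hB]
  exact sum_bilin_lie_single_single B X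

end Casimir

theorem matOp_apply (p : Fin N) (X : Matrix (Fin m) (Fin m) ℂ) (f : TensorPow m N)
    (g : Fin N → Fin m) :
    matOp p X f g = ∑ b, X (g p) b * f (Function.update g p b) := by
  simp [matOp, matUnitOp, Finset.sum_apply, LinearMap.sum_apply]

theorem matOp_single (p : Fin N) (a b : Fin m) :
    matOp p (Matrix.single a b 1) = matUnitOp (N := N) p a b := by
  refine LinearMap.ext fun f => funext fun g => ?_
  simp [matOp_apply, matUnitOp, Matrix.single_apply, ite_and, eq_comm]

theorem matOp_mul (p : Fin N) (X Y : Matrix (Fin m) (Fin m) ℂ) :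
    matOp p (X * Y) = matOp (N := N) p X * matOp p Y := by
  refine LinearMap.ext fun f => funext fun g => ?_
  simp only [matOp_apply, Matrix.mul_apply, Finset.sum_mul, mul_assoc, Module.End.mul_apply,
    Function.update_self, Function.update_idem, Finset.mul_sum]
  exact Finset.sum_comm

noncomputable def matOpAlgHom (p : Fin N) :
    Matrix (Fin m) (Fin m) ℂ →ₐ[ℂ] Module.End ℂ (TensorPow m N) :=
  AlgHom.ofLinearMap
    { toFun := matOp p
      map_add' X Y := by ext f g; simp [matOp_apply, add_mul, Finset.sum_add_distrib]
      map_smul' c X := by ext f g; simp [matOp_apply, Finset.mul_sum, mul_assoc] }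
    (by ext f g; simp [matOp_apply, Matrix.one_apply])
    (matOp_mul p)

theorem matOpAlgHom_apply (p : Fin N) (X : Matrix (Fin m) (Fin m) ℂ) :
    matOpAlgHom p X = matOp p X := rfl

theorem matOp_commute_of_ne {p q : Fin N} (hpq : p ≠ q) (X Y : Matrix (Fin m) (Fin m) ℂ) :
    Commute (matOp p X) (matOp q Y) := by
  refine LinearMap.ext fun f => funext fun g => ?_
  simp only [Module.End.mul_apply, matOp_apply, Function.update_of_ne hpq.symm,
    Function.update_comm hpq, Finset.mul_sum, Function.update_of_ne hpq, mul_left_comm]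
  exact Finset.sum_comm

theorem permOp_mul_matOp (σ : Equiv.Perm (Fin N)) (p : Fin N) (X : Matrix (Fin m) (Fin m) ℂ) :
    permOp σ * matOp p X = matOp (σ p) X * permOp σ := by
  refine LinearMap.ext fun f => funext fun g => ?_
  simp [matOp_apply, permOp, Function.update_comp_eq_of_injective _ σ.injective]

theorem permOp_commute_sum_matOp (σ : Equiv.Perm (Fin N)) (X : Matrix (Fin m) (Fin m) ℂ) :
    Commute (permOp σ) (∑ q, matOp q X) := by
  rw [Commute, SemiconjBy, Finset.mul_sum, Finset.sum_mul]
  simp only [permOp_mul_matOp]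
  exact Equiv.sum_comp σ (fun q => matOp q X * permOp σ)

theorem diagAct_eq_map_sum (ρ : Matrix (Fin m) (Fin m) ℂ →ₗ[ℂ] Module.End ℂ U)
    (X : Matrix (Fin m) (Fin m) ℂ) :
    diagAct (N := N) ρ X = TensorProduct.map (∑ q, matOp q X) 1 + TensorProduct.map 1 (ρ X) := by
  rw [diagAct, Module.End.one_eq_id]
  congr 1
  exact (map_sum (LinearMap.rTensorHom U) _ _).symm

/-- The `H_N`-action on `(ℂ^m)^{⊗N} ⊗ U` given by permutations of the tensor factors
and by `z_p ↦ Σ_{a,b} E_{ab}^{(p)} ⊗ E_{ba}` commutes with the diagonal action of `gl_m`. -/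
theorem stmt5 (m N : ℕ) (U : Type*) [AddCommGroup U] [Module ℂ U]
    (ρ : Matrix (Fin m) (Fin m) ℂ →ₗ[ℂ] Module.End ℂ U)
    (hρ : ∀ X Y : Matrix (Fin m) (Fin m) ℂ,
      ρ (X * Y - Y * X) = ρ X * ρ Y - ρ Y * ρ X) :
    ∀ X : Matrix (Fin m) (Fin m) ℂ,
      (∀ p : Fin N, Commute (diagAct ρ X) (omegaOp ρ p)) ∧
      (∀ σ : Equiv.Perm (Fin N), Commute (diagAct ρ X) (permT σ)) := by
  intro X
  refine ⟨fun p => ?_, fun σ => ?_⟩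
  · have hΩ : omegaOp ρ p = ∑ a, ∑ b,
        TensorProduct.map (matOp p (Matrix.single a b 1)) (ρ (Matrix.single b a 1)) := by
      simp only [omegaOp, matOp_single]
    have hcas := commute_diag_casimir (matOpAlgHom p) ρ hρ X
    simp only [matOpAlgHom_apply] at hcas
    rw [hΩ, diagAct_eq_map_sum,
      ← Finset.sum_erase_add _ (fun q => matOp q X) (Finset.mem_univ p),
      TensorProduct.map_add_left, add_assoc]
    refine .add_left ?_ hcas
    refine .sum_right _ _ _ fun a _ => .sum_right _ _ _ fun b _ =>
      .tensorProduct_map ?_ (.one_left _)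
    exact .sum_left _ _ _ fun q hq => matOp_commute_of_ne (Finset.ne_of_mem_erase hq) _ _
  · rw [diagAct_eq_map_sum, permT, ← Module.End.one_eq_id]
    exact .add_left (.tensorProduct_map (permOp_commute_sum_matOp σ X).symm (.one_right _))
      (.tensorProduct_map (.one_left _) (.one_right _))
end

section
/- For any complex numbers and integers h ≤ ν, the hypergeometric summation identity Σ_{n=h}^{ν} [(−1)^{n−h} n! (ν−h)! / (h! (n−h)! (ν−n)!)] ∏_{s=0}^{n−h−1} 1/(w+s) = ∏_{s=0}^{ν−h−1} (w−h+s−1)/(w+s) holds as an equality of rational functions in the variable w. -/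
/-!
With `m = ν - h` and `k = n - h`, the summand is `(-1)^k C(m,k) (h+1)_k / (w)_k` in Pochhammer
notation, and the right-hand side is `(w-h-1)_m / (w)_m`, so the claim is the Chu–Vandermonde
identity `∑_k (-1)^k C(m,k) (b)_k / (t)_k = (t-b)_m / (t)_m` at `b = h + 1`, `t = w`.
It follows by induction on `m`: Pascal's rule together with
`(b)_k/(t)_k - (b)_{k+1}/(t)_{k+1} = (t-b)/t · (b)_k/(t+1)_k`
turns the sum for `m + 1` at `t` into `(t-b)/t` times the sum for `m` at `t + 1`.
-/

open Finset Polynomial Nat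

section CommSemiring

variable {R : Type*} [CommSemiring R]

lemma ascPochhammer_eval_eq_prod_range (n : ℕ) (x : R) :
    (ascPochhammer R n).eval x = ∏ i ∈ range n, (x + i) := by
  induction n with
  | zero => simp
  | succ n ih => rw [ascPochhammer_succ_eval, ih, prod_range_succ]

lemma ascPochhammer_eval_succ_left (n : ℕ) (x : R) :
    (ascPochhammer R (n + 1)).eval x = x * (ascPochhammer R n).eval (x + 1) := by
  simp [ascPochhammer_succ_left, eval_comp]

lemma ascPochhammer_eval_ne_zero_of_le {m n : ℕ} (hmn : m ≤ n) {x : R}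
    (hx : (ascPochhammer R n).eval x ≠ 0) : (ascPochhammer R m).eval x ≠ 0 := by
  rw [ascPochhammer_eval_eq_prod_range, ← prod_range_mul_prod_Ico _ hmn] at hx
  rw [ascPochhammer_eval_eq_prod_range]
  exact left_ne_zero_of_mul hx

end CommSemiring

section Field

variable {K : Type*} [Field K]

lemma ascPochhammer_div_sub_succ_div (b t : K) (k : ℕ)
    (ht : (ascPochhammer K (k + 1)).eval t ≠ 0) :
    (ascPochhammer K k).eval b / (ascPochhammer K k).eval t
        - (ascPochhammer K (k + 1)).eval b / (ascPochhammer K (k + 1)).eval t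
      = (t - b) / t * ((ascPochhammer K k).eval b / (ascPochhammer K k).eval (t + 1)) := by
  have hshift := ascPochhammer_eval_succ_left k t
  rw [ascPochhammer_succ_eval] at hshift ht ⊢
  rw [ascPochhammer_succ_eval]
  have ht0 : t ≠ 0 := left_ne_zero_of_mul (hshift ▸ ht)
  have ht1 : (ascPochhammer K k).eval (t + 1) ≠ 0 := right_ne_zero_of_mul (hshift ▸ ht)
  obtain ⟨hk, htk⟩ := mul_ne_zero_iff.1 ht
  field_simp
  linear_combination (b - t) * (ascPochhammer K k).eval b * hshift

theorem sum_choose_mul_neg_one_pow_mul_ascPochhammer_div (b : K) (m : ℕ) {t : K}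
    (ht : (ascPochhammer K m).eval t ≠ 0) :
    ∑ k ∈ range (m + 1),
        m.choose k * ((-1) ^ k * ((ascPochhammer K k).eval b / (ascPochhammer K k).eval t))
      = (ascPochhammer K m).eval (t - b) / (ascPochhammer K m).eval t := by
  induction m generalizing t with
  | zero => simp
  | succ m ih =>
    have hshift := ascPochhammer_eval_succ_left m t
    have ht0 : t ≠ 0 := left_ne_zero_of_mul (hshift ▸ ht)
    have ht1 : (ascPochhammer K m).eval (t + 1) ≠ 0 := right_ne_zero_of_mul (hshift ▸ ht)
    have hpascal : ∀ k ∈ range (m + 1),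
        (-1) ^ k * ((ascPochhammer K k).eval b / (ascPochhammer K k).eval t)
          + (-1) ^ (k + 1) * ((ascPochhammer K (k + 1)).eval b / (ascPochhammer K (k + 1)).eval t)
        = (t - b) / t *
            ((-1) ^ k * ((ascPochhammer K k).eval b / (ascPochhammer K k).eval (t + 1))) := by
      intro k hk
      have := ascPochhammer_div_sub_succ_div b t k
        (ascPochhammer_eval_ne_zero_of_le (by simpa using hk) ht)
      rw [pow_succ]
      linear_combination (-1) ^ k * this
    calc _ = ∑ k ∈ range (m + 1), m.choose k * ((t - b) / t *
              ((-1) ^ k * ((ascPochhammer K k).eval b / (ascPochhammer K k).eval (t + 1)))) := by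
          rw [sum_choose_succ_mul (fun k _ ↦ (-1) ^ k * ((ascPochhammer K k).eval b /
            (ascPochhammer K k).eval t)), ← sum_add_distrib]
          exact sum_congr rfl fun k hk ↦ by rw [← mul_add, hpascal k hk]
      _ = (t - b) / t *
            ((ascPochhammer K m).eval (t + 1 - b) / (ascPochhammer K m).eval (t + 1)) := by
          rw [← ih ht1, mul_sum]
          exact sum_congr rfl fun k _ ↦ by ring
      _ = _ := by
          rw [ascPochhammer_eval_succ_left, ascPochhammer_eval_succ_left, sub_add_eq_add_sub]
          field_simp

lemma cast_factorial_add_mul_factorial_div [CharZero K] (h : ℕ) {k m : ℕ} (hkm : k ≤ m) :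
    ((h + k)! * m ! : K) / (h ! * k ! * (m - k)!)
      = m.choose k * (ascPochhammer K k).eval (h + 1 : K) := by
  rw [← factorial_mul_ascPochhammer, ← Nat.choose_mul_factorial_mul_factorial hkm]
  have hh : (h ! : K) ≠ 0 := Nat.cast_ne_zero.2 h.factorial_ne_zero
  have hk : (k ! : K) ≠ 0 := Nat.cast_ne_zero.2 k.factorial_ne_zero
  have hmk : ((m - k)! : K) ≠ 0 := Nat.cast_ne_zero.2 (m - k).factorial_ne_zero
  push_cast
  field_simp

end Field

/-- The Gauss-summation identity: for nonnegative integers `h ≤ ν`, as an equality of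
rational functions in the variable `w`,
`Σ_{n=h}^{ν} (−1)^{n−h} n! (ν−h)! / (h! (n−h)! (ν−n)!) ∏_{s=0}^{n−h−1} 1/(w+s)
  = ∏_{s=0}^{ν−h−1} (w−h+s−1)/(w+s)`
(empty products being `1`).  We work in the field `RatFunc ℂ` of rational functions
over `ℂ`, with `w = X`. -/
theorem stmt12 (h ν : ℕ) (hh : h ≤ ν) :
    ∑ n ∈ Finset.Icc h ν,
      ((-1 : RatFunc ℂ) ^ (n - h) * ((Nat.factorial n : ℕ) : RatFunc ℂ) * ((Nat.factorial (ν - h) : ℕ) : RatFunc ℂ)) /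
          (((Nat.factorial h : ℕ) : RatFunc ℂ) * ((Nat.factorial (n - h) : ℕ) : RatFunc ℂ) * ((Nat.factorial (ν - n) : ℕ) : RatFunc ℂ)) *
        ∏ s ∈ Finset.range (n - h), (RatFunc.X + (s : RatFunc ℂ))⁻¹
    = ∏ s ∈ Finset.range (ν - h),
        (RatFunc.X - (h : RatFunc ℂ) + (s : RatFunc ℂ) - 1) / (RatFunc.X + (s : RatFunc ℂ)) := by
  obtain ⟨m, rfl⟩ := Nat.exists_eq_add_of_le hh
  have hX : (ascPochhammer (RatFunc ℂ) m).eval RatFunc.X ≠ 0 := by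
    rw [ascPochhammer_eval_eq_prod_range]
    exact prod_ne_zero_iff.2 fun s _ ↦ by
      simpa using RatFunc.algebraMap_ne_zero (Polynomial.X_add_C_ne_zero (s : ℂ))
  have hnum : ∏ s ∈ range m, ((RatFunc.X : RatFunc ℂ) - h + s - 1)
      = (ascPochhammer (RatFunc ℂ) m).eval (RatFunc.X - ((h : RatFunc ℂ) + 1)) := by
    rw [ascPochhammer_eval_eq_prod_range]
    exact prod_congr rfl fun _ _ ↦ by ring
  rw [← Ico_add_one_right_eq_Icc, sum_Ico_eq_sum_range, show h + m + 1 - h = m + 1 by omega]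
  simp only [Nat.add_sub_cancel_left, Nat.add_sub_add_left]
  rw [prod_div_distrib, hnum, ← ascPochhammer_eval_eq_prod_range,
    ← sum_choose_mul_neg_one_pow_mul_ascPochhammer_div ((h : RatFunc ℂ) + 1) m hX]
  refine sum_congr rfl fun k hk ↦ ?_
  have hkm : k ≤ m := Nat.lt_succ_iff.1 (mem_range.1 hk)
  rw [prod_inv_distrib, ← ascPochhammer_eval_eq_prod_range]
  linear_combination (-1) ^ k * ((ascPochhammer (RatFunc ℂ) k).eval RatFunc.X)⁻¹ *
    cast_factorial_add_mul_factorial_div (K := RatFunc ℂ) h hkm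
end
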